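/- arXiv:2505.15758 — 4 statements merged into one kernel-verified Lean document; each statement's English description precedes it below -/
import Mathlib

section
/- Fix a syndrome σ attained by some error, and for each class C having syndrome σ let n_max(C) be the number of errors e in C with E e = E_min(σ). Then for every class C̃ having syndrome σ, the limit as T → 0⁺ of Z_T(C̃) / (Σ_{C having syndrome σ} Z_T(C)) equals n_max(C̃) / (Σ_{C having syndrome σ} n_max(C)) (Proposition 1, statement 3: a probabilistic partition function decoder at T = 0 is a maximum probability decoder). -/
/-!
Multiply numerator and denominator by `exp (Emin / T)`. An error `e` in a class with syndrome `σ`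
then contributes `exp ((Emin - E e) / T)`, and since `Emin ≤ E e` this tends to `1` when
`E e = Emin` and to `0` otherwise. So the rescaled `Z_T(C)` tends to `n_max(C)`, and the quotient
converges because the limit `Σ_C n_max(C)` of the denominator is positive: a minimiser of `E` on
the errors with syndrome `σ` is counted in the class it belongs to.
-/

open Finset Filter

variable {𝓔 𝓢 𝓒 : Type*}

/-- Error probability `P(e) = exp(−E e / T_N) / Σ_{e'} exp(−E e' / T_N)`. -/
noncomputable def Perr [Fintype 𝓔] (E : 𝓔 → ℝ) (T_N : ℝ) (e : 𝓔) : ℝ :=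
  Real.exp (-(E e) / T_N) / ∑ e' : 𝓔, Real.exp (-(E e') / T_N)

/-- Class partition function `Z_T(C) = Σ_{e : c e = C} exp(−E e / T)`. -/
noncomputable def Zpf [Fintype 𝓔] [DecidableEq 𝓒] (c : 𝓔 → 𝓒) (E : 𝓔 → ℝ) (T : ℝ) (C : 𝓒) : ℝ :=
  ∑ e ∈ Finset.univ.filter (fun e => c e = C), Real.exp (-(E e) / T)

/-- Class probability `P(C) = Σ_{e : c e = C} P(e)`. -/
noncomputable def Pclass [Fintype 𝓔] [DecidableEq 𝓒] (c : 𝓔 → 𝓒) (E : 𝓔 → ℝ) (T_N : ℝ) (C : 𝓒) : ℝ :=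
  ∑ e ∈ Finset.univ.filter (fun e => c e = C), Perr E T_N e

/-- Syndrome probability `P(σ) = Σ_{e : s e = σ} P(e)`. -/
noncomputable def Psynd [Fintype 𝓔] [DecidableEq 𝓢] (s : 𝓔 → 𝓢) (E : 𝓔 → ℝ) (T_N : ℝ) (σ : 𝓢) : ℝ :=
  ∑ e ∈ Finset.univ.filter (fun e => s e = σ), Perr E T_N e

/-- The finite set of classes having syndrome `σ`. -/
abbrev classesOf [Fintype 𝓔] [DecidableEq 𝓢] [DecidableEq 𝓒] (s : 𝓔 → 𝓢) (c : 𝓔 → 𝓒) (σ : 𝓢) :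
    Finset 𝓒 :=
  (Finset.univ.filter (fun e => s e = σ)).image c

/-- `Max(σ,T)`: the classes `C` having syndrome `σ` maximizing `Z_T` among classes with syndrome `σ`. -/
noncomputable def MaxSet [Fintype 𝓔] [DecidableEq 𝓢] [DecidableEq 𝓒]
    (s : 𝓔 → 𝓢) (c : 𝓔 → 𝓒) (E : 𝓔 → ℝ) (σ : 𝓢) (T : ℝ) : Finset 𝓒 :=
  (classesOf s c σ).filter (fun C => ∀ C' ∈ classesOf s c σ, Zpf c E T C' ≤ Zpf c E T C)

/-- `n_max(C)`: the number of errors in class `C` attaining the minimal energy `Emin`. -/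
noncomputable def nmax [Fintype 𝓔] [DecidableEq 𝓒] (c : 𝓔 → 𝓒) (E : 𝓔 → ℝ) (Emin : ℝ) (C : 𝓒) : ℕ :=
  (Finset.univ.filter (fun e => c e = C ∧ E e = Emin)).card

open Topology

lemma tendsto_exp_sub_div_nhdsGT_zero {m x : ℝ} (hmx : m ≤ x) :
    Tendsto (fun T : ℝ => Real.exp ((m - x) / T)) (𝓝[>] 0)
      (𝓝 (if x = m then 1 else 0)) := by
  split_ifs with hx
  · simp [hx]
  · have hneg : m - x < 0 := sub_neg.mpr (lt_of_le_of_ne hmx (Ne.symm hx))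
    have hdiv : Tendsto (fun T : ℝ => (m - x) / T) (𝓝[>] 0) atBot := by
      simpa only [div_eq_mul_inv] using tendsto_inv_nhdsGT_zero.const_mul_atTop_of_neg hneg
    exact Real.tendsto_exp_atBot.comp hdiv

lemma tendsto_sum_exp_sub_div_nhdsGT_zero {ι : Type*} (t : Finset ι) (f : ι → ℝ) {m : ℝ}
    (hm : ∀ i ∈ t, m ≤ f i) :
    Tendsto (fun T : ℝ => ∑ i ∈ t, Real.exp ((m - f i) / T)) (𝓝[>] 0)
      (𝓝 (#{i ∈ t | f i = m} : ℝ)) := by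
  rw [Finset.natCast_card_filter]
  exact tendsto_finsetSum t fun i hi => tendsto_exp_sub_div_nhdsGT_zero (hm i hi)

section Decoding

variable [Fintype 𝓔] [DecidableEq 𝓢] [DecidableEq 𝓒]

lemma Zpf_mul_exp (c : 𝓔 → 𝓒) (E : 𝓔 → ℝ) (T m : ℝ) (C : 𝓒) :
    Zpf c E T C * Real.exp (m / T) = ∑ e with c e = C, Real.exp ((m - E e) / T) := by
  rw [Zpf, Finset.sum_mul]
  refine Finset.sum_congr rfl fun e _ => ?_
  rw [← Real.exp_add]
  ring_nf

lemma tendsto_Zpf_mul_exp (c : 𝓔 → 𝓒) (E : 𝓔 → ℝ) {Emin : ℝ} {C : 𝓒}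
    (hEmin : ∀ e, c e = C → Emin ≤ E e) :
    Tendsto (fun T => Zpf c E T C * Real.exp (Emin / T)) (𝓝[>] 0)
      (𝓝 (nmax c E Emin C : ℝ)) := by
  simp_rw [Zpf_mul_exp]
  have hsum := tendsto_sum_exp_sub_div_nhdsGT_zero {e | c e = C} E fun e he =>
    hEmin e (Finset.mem_filter.mp he).2
  rwa [Finset.filter_filter] at hsum

lemma mem_classesOf {s : 𝓔 → 𝓢} (c : 𝓔 → 𝓒) {σ : 𝓢} {e : 𝓔} (he : s e = σ) :
    c e ∈ classesOf s c σ :=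
  Finset.mem_image.mpr ⟨e, by simpa using he, rfl⟩

lemma syndrome_eq_of_mem_classesOf {s : 𝓔 → 𝓢} {c : 𝓔 → 𝓒}
    (hrefine : ∀ e e' : 𝓔, c e = c e' → s e = s e') {σ : 𝓢} {C : 𝓒}
    (hC : C ∈ classesOf s c σ) {e : 𝓔} (he : c e = C) : s e = σ := by
  obtain ⟨e', he', rfl⟩ := Finset.mem_image.mp hC
  rw [hrefine e e' he, (Finset.mem_filter.mp he').2]

lemma sum_nmax_classesOf_pos (s : 𝓔 → 𝓢) (c : 𝓔 → 𝓒) (E : 𝓔 → ℝ) {σ : 𝓢} {Emin : ℝ}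
    (hEmin : Emin ∈ E '' {e | s e = σ}) :
    0 < ∑ C ∈ classesOf s c σ, (nmax c E Emin C : ℝ) := by
  obtain ⟨e, hs, hE⟩ := hEmin
  have hpos : 0 < nmax c E Emin (c e) := Finset.card_pos.mpr ⟨e, by simp [hE]⟩
  exact Finset.sum_pos' (fun _ _ => by positivity) ⟨c e, mem_classesOf c hs, by exact_mod_cast hpos⟩

end Decoding

theorem stmt2_general {𝓔 𝓢 𝓒 : Type*} [Fintype 𝓔] [DecidableEq 𝓢] [DecidableEq 𝓒]
    (s : 𝓔 → 𝓢) (c : 𝓔 → 𝓒) (E : 𝓔 → ℝ)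
    (hrefine : ∀ e e' : 𝓔, c e = c e' → s e = s e')
    (σ : 𝓢)
    (Emin : ℝ) (hEmin : IsLeast (E '' {e | s e = σ}) Emin)
    (Ctil : 𝓒) (hCtil : ∃ e, c e = Ctil ∧ s e = σ) :
    Filter.Tendsto (fun T => Zpf c E T Ctil / ∑ C ∈ classesOf s c σ, Zpf c E T C)
      (nhdsWithin 0 (Set.Ioi 0))
      (nhds ((nmax c E Emin Ctil : ℝ) / ∑ C ∈ classesOf s c σ, (nmax c E Emin C : ℝ))) := by
  have hclass : ∀ C ∈ classesOf s c σ, ∀ e, c e = C → Emin ≤ E e := fun C hC e he =>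
    hEmin.2 ⟨e, syndrome_eq_of_mem_classesOf hrefine hC he, rfl⟩
  obtain ⟨e, rfl, hs⟩ := hCtil
  have hnum := tendsto_Zpf_mul_exp c E (hclass (c e) (mem_classesOf c hs))
  have hden := tendsto_finsetSum (classesOf s c σ) fun C hC =>
    tendsto_Zpf_mul_exp c E (hclass C hC)
  refine (hnum.div hden (sum_nmax_classesOf_pos s c E hEmin.1).ne').congr fun T => ?_
  rw [Pi.div_apply, ← Finset.sum_mul, mul_div_mul_right _ _ (Real.exp_ne_zero _)]

/-- a probabilistic partition function decoder at `T = 0` is a maximum probability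
decoder: `Z_T(C̃)/Σ_C Z_T(C) → n_max(C̃)/Σ_C n_max(C)` as `T → 0⁺`. -/
theorem stmt2 {𝓔 𝓢 𝓒 : Type*} [Fintype 𝓔] [Nonempty 𝓔] [DecidableEq 𝓢] [DecidableEq 𝓒]
    (s : 𝓔 → 𝓢) (c : 𝓔 → 𝓒) (E : 𝓔 → ℝ)
    (hrefine : ∀ e e' : 𝓔, c e = c e' → s e = s e')
    (σ : 𝓢) (hσ : ∃ e, s e = σ)
    (Emin : ℝ) (hEmin : IsLeast (E '' {e | s e = σ}) Emin)
    (Ctil : 𝓒) (hCtil : ∃ e, c e = Ctil ∧ s e = σ) :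
    Filter.Tendsto (fun T => Zpf c E T Ctil / ∑ C ∈ classesOf s c σ, Zpf c E T C)
      (nhdsWithin 0 (Set.Ioi 0))
      (nhds ((nmax c E Emin Ctil : ℝ) / ∑ C ∈ classesOf s c σ, (nmax c E Emin C : ℝ))) :=
  stmt2_general s c E hrefine σ Emin hEmin Ctil hCtil
end

section
/- For every temperature T > 0, the success rate of the probabilistic partition function decoder at temperature T equals the order probability at temperature T; that is, Σ_σ P(σ) · Σ_{C̃ having syndrome σ} P(C̃|σ) · Z_T(C̃) / (Σ_{C having syndrome σ} Z_T(C)) = Σ_e P(e) · Z_T(c e) / (Σ_{C having syndrome s e} Z_T(C)), where the outer sum on the left runs over syndromes σ attained by some error (Proposition 3). -/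
open Finset Filter

variable {𝓔 𝓢 𝓒 : Type*}

/-- the success rate of the probabilistic partition function decoder at temperature
`T` equals the order probability at temperature `T`. -/
theorem stmt4 {𝓔 𝓢 𝓒 : Type*} [Fintype 𝓔] [Nonempty 𝓔] [DecidableEq 𝓢] [DecidableEq 𝓒]
    (s : 𝓔 → 𝓢) (c : 𝓔 → 𝓒) (E : 𝓔 → ℝ) (T_N : ℝ) (hTN : 0 < T_N)
    (hrefine : ∀ e e' : 𝓔, c e = c e' → s e = s e')
    (T : ℝ) (hT : 0 < T) :
    ∑ σ ∈ Finset.univ.image s, Psynd s E T_N σ *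
        ∑ Ctil ∈ classesOf s c σ, (Pclass c E T_N Ctil / Psynd s E T_N σ) *
          (Zpf c E T Ctil / ∑ C ∈ classesOf s c σ, Zpf c E T C)
      = ∑ e : 𝓔, Perr E T_N e *
          (Zpf c E T (c e) / ∑ C ∈ classesOf s c (s e), Zpf c E T C) := by
  have hPerr : ∀ e : 𝓔, 0 < Perr E T_N e := fun e =>
    div_pos (Real.exp_pos _) (Finset.sum_pos (fun e' _ => Real.exp_pos _) Finset.univ_nonempty)
  rw [← Finset.sum_fiberwise_of_maps_to (g := s)
    (fun e _ => Finset.mem_image_of_mem s (Finset.mem_univ e))]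
  refine Finset.sum_congr rfl fun σ hσ => ?_
  have hPs : 0 < Psynd s E T_N σ := by
    obtain ⟨e₀, _, he₀⟩ := Finset.mem_image.mp hσ
    exact Finset.sum_pos (fun e _ => hPerr e)
      ⟨e₀, Finset.mem_filter.mpr ⟨Finset.mem_univ _, he₀⟩⟩
  rw [← Finset.sum_fiberwise_of_maps_to (g := c) (t := classesOf s c σ)
    (fun e he => Finset.mem_image_of_mem c he), Finset.mul_sum]
  refine Finset.sum_congr rfl fun C hC => ?_
  obtain ⟨e₀, he₀s, he₀c⟩ := Finset.mem_image.mp hC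
  have he₀σ : s e₀ = σ := (Finset.mem_filter.mp he₀s).2
  have hset : (Finset.univ.filter (fun e => s e = σ)).filter (fun e => c e = C)
      = Finset.univ.filter (fun e => c e = C) := by
    ext e
    simp only [Finset.mem_filter, Finset.mem_univ, true_and]
    constructor
    · rintro ⟨_, h⟩; exact h
    · intro h
      exact ⟨(hrefine e e₀ (h.trans he₀c.symm)).trans he₀σ, h⟩
  rw [hset]
  have hterm : ∀ e ∈ Finset.univ.filter (fun e => c e = C),
      Perr E T_N e * (Zpf c E T (c e) / ∑ C' ∈ classesOf s c (s e), Zpf c E T C')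
        = Perr E T_N e * (Zpf c E T C / ∑ C' ∈ classesOf s c σ, Zpf c E T C') := by
    intro e he
    have hce : c e = C := (Finset.mem_filter.mp he).2
    have hse : s e = σ := (hrefine e e₀ (hce.trans he₀c.symm)).trans he₀σ
    rw [hce, hse]
  rw [Finset.sum_congr rfl hterm, ← Finset.sum_mul]
  show Psynd s E T_N σ * (Pclass c E T_N C / Psynd s E T_N σ * _) = Pclass c E T_N C * _
  rw [← mul_assoc, mul_div_cancel₀ _ hPs.ne']
end

section
/- Let T > 0. Suppose that for every syndrome σ attained by some error there exists a class C* ∈ Max(σ, T_N) such that Z_T(C*) > Z_T(C') for every class C' having syndrome σ with C' ∉ Max(σ, T_N). Then the decoding probability at temperature T equals the decoding probability at temperature T_N: Σ_e P(e) · Σ_{C ∈ Max(s e, T)} (1/|Max(s e, T)|) · Z_{T_N}(C)/(Σ_{C' having syndrome s e} Z_{T_N}(C')) = Σ_e P(e) · Σ_{C ∈ Max(s e, T_N)} (1/|Max(s e, T_N)|) · Z_{T_N}(C)/(Σ_{C' having syndrome s e} Z_{T_N}(C')) (Corollary 1: the maximum partition function decoder at temperature T has the success rate of an optimal decoder). 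-/
open Finset Filter

variable {𝓔 𝓢 𝓒 : Type*}

/-- Corollary 1: if for each attained syndrome some class in `Max(σ, T_N)` has a
strictly larger `Z_T` than every class outside `Max(σ, T_N)`, then the decoding probability at
temperature `T` equals the decoding probability at `T_N`. -/
theorem stmt5 {𝓔 𝓢 𝓒 : Type*} [Fintype 𝓔] [Nonempty 𝓔] [DecidableEq 𝓢] [DecidableEq 𝓒]
    (s : 𝓔 → 𝓢) (c : 𝓔 → 𝓒) (E : 𝓔 → ℝ) (T_N : ℝ) (hTN : 0 < T_N)
    (hrefine : ∀ e e' : 𝓔, c e = c e' → s e = s e')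
    (T : ℝ) (hT : 0 < T)
    (hyp : ∀ σ ∈ Finset.univ.image s, ∃ Cstar ∈ MaxSet s c E σ T_N,
      ∀ C' ∈ classesOf s c σ, C' ∉ MaxSet s c E σ T_N →
        Zpf c E T C' < Zpf c E T Cstar) :
    ∑ e : 𝓔, Perr E T_N e *
        ∑ C ∈ MaxSet s c E (s e) T, (1 / ((MaxSet s c E (s e) T).card : ℝ)) *
          (Zpf c E T_N C / ∑ C' ∈ classesOf s c (s e), Zpf c E T_N C')
      = ∑ e : 𝓔, Perr E T_N e *
          ∑ C ∈ MaxSet s c E (s e) T_N, (1 / ((MaxSet s c E (s e) T_N).card : ℝ)) *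
            (Zpf c E T_N C / ∑ C' ∈ classesOf s c (s e), Zpf c E T_N C') := by
  apply Finset.sum_congr rfl
  intro e _
  congr 1
  set σ := s e with hσ
  obtain ⟨Cstar, hCstar, hstrict⟩ := hyp σ (Finset.mem_image_of_mem s (Finset.mem_univ e))
  have hclne : (classesOf s c σ).Nonempty :=
    ⟨c e, Finset.mem_image_of_mem c (by simp [σ])⟩
  obtain ⟨C0, hC0mem, hC0max⟩ := Finset.exists_max_image (classesOf s c σ) (Zpf c E T) hclne
  have hC0 : C0 ∈ MaxSet s c E σ T := Finset.mem_filter.mpr ⟨hC0mem, hC0max⟩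
  have hsub : MaxSet s c E σ T ⊆ MaxSet s c E σ T_N := by
    intro C hC
    rw [MaxSet, Finset.mem_filter] at hC
    by_contra hnot
    have h1 := hstrict C hC.1 hnot
    have h2 := hC.2 Cstar (Finset.mem_filter.mp hCstar).1
    linarith
  have hconst : ∀ C ∈ MaxSet s c E σ T_N, Zpf c E T_N C = Zpf c E T_N Cstar := by
    intro C hC
    rw [MaxSet, Finset.mem_filter] at hC
    have hC' := Finset.mem_filter.mp hCstar
    exact le_antisymm (hC'.2 C hC.1) (hC.2 Cstar hC'.1)
  have key : ∀ (S : Finset 𝓒), S.Nonempty → S ⊆ MaxSet s c E σ T_N →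
      ∑ C ∈ S, (1 / (S.card : ℝ)) * (Zpf c E T_N C / ∑ C' ∈ classesOf s c σ, Zpf c E T_N C')
        = Zpf c E T_N Cstar / ∑ C' ∈ classesOf s c σ, Zpf c E T_N C' := by
    intro S hS hsub'
    have hcard : (S.card : ℝ) ≠ 0 := Nat.cast_ne_zero.mpr (Finset.card_ne_zero.mpr hS)
    rw [Finset.sum_congr rfl (fun C hC => by rw [hconst C (hsub' hC)]),
      Finset.sum_const, nsmul_eq_mul, ← mul_assoc, mul_one_div, div_self hcard, one_mul]
  rw [key _ ⟨C0, hC0⟩ hsub, key _ ⟨Cstar, hCstar⟩ (Finset.Subset.refl _)]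
end

section
/- At the Nishimori temperature, the order probability never exceeds the decoding probability: Σ_e P(e) · Z_{T_N}(c e)/(Σ_{C having syndrome s e} Z_{T_N}(C)) ≤ Σ_e P(e) · Σ_{C ∈ Max(s e, T_N)} (1/|Max(s e, T_N)|) · Z_{T_N}(C)/(Σ_{C' having syndrome s e} Z_{T_N}(C')); that is, the probabilistic partition function decoder at T_N is suboptimal compared to the maximum partition function decoder at T_N. -/
open Finset Filter

variable {𝓔 𝓢 𝓒 : Type*}

/-- at the Nishimori temperature the order probability never exceeds the decoding
probability. -/
theorem stmt15 {𝓔 𝓢 𝓒 : Type*} [Fintype 𝓔] [Nonempty 𝓔] [DecidableEq 𝓢] [DecidableEq 𝓒]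
    (s : 𝓔 → 𝓢) (c : 𝓔 → 𝓒) (E : 𝓔 → ℝ) (T_N : ℝ) (hTN : 0 < T_N)
    (hrefine : ∀ e e' : 𝓔, c e = c e' → s e = s e') :
    ∑ e : 𝓔, Perr E T_N e *
        (Zpf c E T_N (c e) / ∑ C ∈ classesOf s c (s e), Zpf c E T_N C)
      ≤ ∑ e : 𝓔, Perr E T_N e *
          ∑ C ∈ MaxSet s c E (s e) T_N, (1 / ((MaxSet s c E (s e) T_N).card : ℝ)) *
            (Zpf c E T_N C / ∑ C' ∈ classesOf s c (s e), Zpf c E T_N C') := by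

  apply Finset.sum_le_sum
  intro e _
  have hce : c e ∈ classesOf s c (s e) :=
    Finset.mem_image.mpr ⟨e, by simp, rfl⟩
  have hZpos : ∀ C ∈ classesOf s c (s e), 0 < Zpf c E T_N C := by
    intro C hC
    obtain ⟨e0, _, rfl⟩ := Finset.mem_image.mp hC
    exact Finset.sum_pos (fun i _ => Real.exp_pos _) ⟨e0, by simp⟩
  have hD : 0 < ∑ C ∈ classesOf s c (s e), Zpf c E T_N C :=
    Finset.sum_pos hZpos ⟨c e, hce⟩
  have hmax : (MaxSet s c E (s e) T_N).Nonempty := by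
    obtain ⟨C, hC, hCmax⟩ :=
      Finset.exists_max_image (classesOf s c (s e)) (Zpf c E T_N) ⟨c e, hce⟩
    exact ⟨C, Finset.mem_filter.mpr ⟨hC, hCmax⟩⟩
  have hk : (0:ℝ) < (MaxSet s c E (s e) T_N).card := by
    exact_mod_cast Finset.card_pos.mpr hmax
  have hP : 0 ≤ Perr E T_N e := by
    apply div_nonneg (Real.exp_pos _).le
    exact Finset.sum_nonneg fun i _ => (Real.exp_pos _).le
  apply mul_le_mul_of_nonneg_left _ hP
  have key : ∀ C ∈ MaxSet s c E (s e) T_N,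
      (1 / ((MaxSet s c E (s e) T_N).card : ℝ)) *
        (Zpf c E T_N (c e) / ∑ C' ∈ classesOf s c (s e), Zpf c E T_N C') ≤
      (1 / ((MaxSet s c E (s e) T_N).card : ℝ)) *
        (Zpf c E T_N C / ∑ C' ∈ classesOf s c (s e), Zpf c E T_N C') := by
    intro C hC
    obtain ⟨_, hCmax⟩ := Finset.mem_filter.mp hC
    apply mul_le_mul_of_nonneg_left _ (by positivity)
    exact div_le_div_of_nonneg_right (hCmax _ hce) hD.le
  calc Zpf c E T_N (c e) / ∑ C ∈ classesOf s c (s e), Zpf c E T_N C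
      = ∑ _C ∈ MaxSet s c E (s e) T_N, (1 / ((MaxSet s c E (s e) T_N).card : ℝ)) *
          (Zpf c E T_N (c e) / ∑ C' ∈ classesOf s c (s e), Zpf c E T_N C') := by
        rw [Finset.sum_const, nsmul_eq_mul, ← mul_assoc, mul_one_div,
          div_self hk.ne', one_mul]
    _ ≤ _ := Finset.sum_le_sum key
end
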